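/- Let X be γ-extremally disconnected with γ open and regular. If A is γ-regular-open, then A is γ-θ-closed, i.e., γcl_θ(A) = A; moreover A is γ-θ-open (X − A is γ-θ-closed), so A is γ-θ-clopen. -/
import Mathlib


open Set TopologicalSpace

variable {X : Type*}

/-- `γ`-interior: points of `A` having an open nbd `N` with `γ(N) ⊆ A`. -/
def gInt [TopologicalSpace X] (g : Set X → Set X) (A : Set X) : Set X :=
  {x | x ∈ A ∧ ∃ N, IsOpen N ∧ x ∈ N ∧ g N ⊆ A}

/-- `γ`-closure. -/
def gCl [TopologicalSpace X] (g : Set X → Set X) (A : Set X) : Set X :=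
  {x | ∀ U, IsOpen U → x ∈ U → (g U ∩ A).Nonempty}

def GOpen [TopologicalSpace X] (g : Set X → Set X) (A : Set X) : Prop := A = gInt g A

def GClosed [TopologicalSpace X] (g : Set X → Set X) (A : Set X) : Prop := gCl g A ⊆ A

def GRegOpen [TopologicalSpace X] (g : Set X → Set X) (A : Set X) : Prop :=
  A = gInt g (gCl g A)

/-- `γ-θ`-closure. -/
def gThCl [TopologicalSpace X] (g : Set X → Set X) (A : Set X) : Set X :=
  {x | ∀ U, GOpen g U → x ∈ U → (gCl g U ∩ A).Nonempty}

def GThClosed [TopologicalSpace X] (g : Set X → Set X) (A : Set X) : Prop := gThCl g A = A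

def GThOpen [TopologicalSpace X] (g : Set X → Set X) (A : Set X) : Prop := GThClosed g Aᶜ

/-- The operation condition `V ⊆ γ(V)` for open `V`. -/
def IsGammaOp [TopologicalSpace X] (g : Set X → Set X) : Prop :=
  ∀ V, IsOpen V → V ⊆ g V

/-- `γ` is a regular operation. -/
def RegularOp [TopologicalSpace X] (g : Set X → Set X) : Prop :=
  ∀ U V (x : X), IsOpen U → IsOpen V → x ∈ U → x ∈ V →
    ∃ W, IsOpen W ∧ x ∈ W ∧ g W ⊆ g U ∩ g V

/-- `γ` is an open operation. -/
def OpenOp [TopologicalSpace X] (g : Set X → Set X) : Prop :=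
  ∀ U (x : X), IsOpen U → x ∈ U → ∃ B, GOpen g B ∧ x ∈ B ∧ B ⊆ g U

/-- `γ`-extremally disconnected space. -/
def GammaED [TopologicalSpace X] (g : Set X → Set X) : Prop :=
  ∀ U, GOpen g U → GOpen g (gCl g U)

/-- A filterbase. -/
def Filterbase (Γ : Set (Set X)) : Prop :=
  Γ.Nonempty ∧ (∀ F ∈ Γ, F.Nonempty) ∧
    ∀ F₁ ∈ Γ, ∀ F₂ ∈ Γ, ∃ F₃ ∈ Γ, F₃ ⊆ F₁ ∩ F₂

/-- A maximal filterbase (ultrafilter-like characterization). -/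
def MaxFilterbase (Γ : Set (Set X)) : Prop :=
  Filterbase Γ ∧ ∀ S : Set X, (∃ F ∈ Γ, F ⊆ S) ∨ (∃ F ∈ Γ, F ⊆ Sᶜ)

/-- `Γ` γ-R-converges to `x₀`. -/
def GRConv [TopologicalSpace X] (g : Set X → Set X) (Γ : Set (Set X)) (x₀ : X) : Prop :=
  ∀ A, GRegOpen g A → x₀ ∈ A → ∃ F ∈ Γ, F ⊆ A

/-- `Γ` γ-R-accumulates to `x₀`. -/
def GRAcc [TopologicalSpace X] (g : Set X → Set X) (Γ : Set (Set X)) (x₀ : X) : Prop :=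
  ∀ A, GRegOpen g A → x₀ ∈ A → ∀ F ∈ Γ, (F ∩ A).Nonempty

/-- `X` is a `γ`-closed space. -/
def GammaClosedSpace [TopologicalSpace X] (g : Set X → Set X) : Prop :=
  ∀ C : Set (Set X), (∀ V ∈ C, GOpen g V) → ⋃₀ C = univ →
    ∃ D ⊆ C, D.Finite ∧ (⋃ V ∈ D, gCl g V) = univ


lemma gInt_gopen [TopologicalSpace X] {g : Set X → Set X} (hop : OpenOp g) (S : Set X) :
    GOpen g (gInt g S) := by
  apply Set.Subset.antisymm
  · rintro x ⟨hxS, N, hN, hxN, hNS⟩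
    obtain ⟨B, hB, hxB, hBgN⟩ := hop N x hN hxN
    have hBsub : B ⊆ gInt g S := by
      intro y hy
      rw [hB] at hy
      obtain ⟨hyB, M, hM, hyM, hMB⟩ := hy
      exact ⟨hNS (hBgN hyB), M, hM, hyM, fun z hz => hNS (hBgN (hMB hz))⟩
    have hx' : x ∈ gInt g B := hB ▸ hxB
    obtain ⟨_, M, hM, hxM, hMB⟩ := hx'
    exact ⟨⟨hxS, N, hN, hxN, hNS⟩, M, hM, hxM, fun z hz => hBsub (hMB hz)⟩
  · rintro x ⟨hx, _⟩
    exact hx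

lemma subset_gCl [TopologicalSpace X] {g : Set X → Set X} (hg : IsGammaOp g) (S : Set X) :
    S ⊆ gCl g S := fun x hx U hU hxU => ⟨x, hg U hU hxU, hx⟩

lemma subset_gThCl [TopologicalSpace X] {g : Set X → Set X} (hg : IsGammaOp g) (S : Set X) :
    S ⊆ gThCl g S := fun x hx U hU hxU => ⟨x, subset_gCl hg U hxU, hx⟩

theorem gregopen_is_gThClopen [TopologicalSpace X] (g : Set X → Set X)
    (hg : IsGammaOp g) (hop : OpenOp g) (hreg : RegularOp g) (hED : GammaED g)
    (A : Set X) (hA : GRegOpen g A) :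
    GThClosed g A ∧ GThOpen g A := by
  have hAopen : GOpen g A := by
    have h := gInt_gopen hop (gCl g A)
    rwa [← hA] at h
  have hclA : gCl g A = A := (hED A hAopen).trans hA.symm
  -- no point of A lies in gCl g Aᶜ
  have key : ∀ y ∈ A, y ∉ gCl g Aᶜ := by
    intro y hy hycl
    have hy' : y ∈ gInt g A := hAopen ▸ hy
    obtain ⟨_, N, hN, hyN, hNA⟩ := hy'
    obtain ⟨z, hzN, hzA⟩ := hycl N hN hyN
    exact hzA (hNA hzN)
  have hAcOpen : GOpen g Aᶜ := by
    apply Set.Subset.antisymm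
    · intro x hx
      have hxcl : x ∉ gCl g A := fun h => hx (hclA ▸ h)
      simp only [gCl, Set.mem_setOf_eq, not_forall] at hxcl
      obtain ⟨U, hU, hxU, hne⟩ := hxcl
      refine ⟨hx, U, hU, hxU, fun z hz => ?_⟩
      intro hzA
      exact hne ⟨z, hz, hzA⟩
    · rintro x ⟨hx, _⟩
      exact hx
  constructor
  · apply Set.Subset.antisymm
    · intro x hx
      by_contra hxA
      obtain ⟨y, hycl, hyA⟩ := hx Aᶜ hAcOpen hxA
      exact key y hyA hycl
    · exact subset_gThCl hg A
  · apply Set.Subset.antisymm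
    · intro x hx
      by_contra hxA
      rw [Set.notMem_compl_iff] at hxA
      obtain ⟨y, hycl, hyA⟩ := hx A hAopen hxA
      exact hyA (hclA ▸ hycl)
    · exact subset_gThCl hg Aᶜ
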